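/- arXiv:cs/0001026 — 3 statements merged into one kernel-verified Lean document; each statement's English description precedes it below -/
import Mathlib

section
/- Continuity of the operator T_w (Lemma A.2): for every world w, the operator T_w on the complete lattice of local name assignments (ordered pointwise) is continuous, i.e., it is monotone and for every increasing sequence l_0 ≤ l_1 ≤ … with pointwise supremum l_ω one has T_w(l_ω) equal to the pointwise supremum of the sequence T_w(l_0) ≤ T_w(l_1) ≤ …. -/
/-- Principal expressions over keys `K`, global names `G`, local names `N`. -/
inductive PExp (K G N : Type*) where
  | key : K → PExp K G N
  | glob : G → PExp K G N
  | loc : N → PExp K G N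
  | s : PExp K G N → PExp K G N → PExp K G N

/-- Formulas of LLNC. -/
inductive Fml (K G N : Type*) where
  | bdto : PExp K G N → PExp K G N → Fml K G N
  | cert : K → Fml K G N → Fml K G N
  | not : Fml K G N → Fml K G N
  | and : Fml K G N → Fml K G N → Fml K G N

/-- A world: an interpretation of global names and an assignment of
certificates to keys, with only finitely many certificates issued. -/
structure World (K G N : Type*) where
  beta : G → Set K
  certs : K → Set (Fml K G N)
  finite_certs : (⋃ k, certs k).Finite

variable {K G N : Type*}

/-- The interpretation of a principal expression relative to a world, a
local name assignment, and a key. -/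
def interp (w : World K G N) (l : K → N → Set K) : PExp K G N → K → Set K
  | .key k', _ => {k'}
  | .glob g, _ => w.beta g
  | .loc n, k => l k n
  | .s p q, k => ⋃ k' ∈ interp w l p k, interp w l q k'

/-- Satisfaction of a formula at a world, local name assignment, and key. -/
def Sat (w : World K G N) (l : K → N → Set K) (k : K) : Fml K G N → Prop
  | .bdto p q => interp w l q k ⊆ interp w l p k
  | .cert k' φ => φ ∈ w.certs k'
  | .not φ => ¬ Sat w l k φ
  | .and φ ψ => Sat w l k φ ∧ Sat w l k ψ

/-- A local name assignment is consistent with a world if every issued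
binding certificate holds at the issuer. -/
def Consistent (w : World K G N) (l : K → N → Set K) : Prop :=
  ∀ (k : K) (n : N) (p : PExp K G N),
    Fml.bdto (.loc n) p ∈ w.certs k → Sat w l k (.bdto (.loc n) p)

/-- The operator `T_w` on local name assignments. -/
def Tw (w : World K G N) (l : K → N → Set K) : K → N → Set K :=
  fun k n => ⋃ p ∈ {p : PExp K G N | Fml.bdto (.loc n) p ∈ w.certs k}, interp w l p k

theorem interp_mono (w : World K G N) {l l' : K → N → Set K} (h : l ≤ l') :
    ∀ (p : PExp K G N) (k : K), interp w l p k ⊆ interp w l' p k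
  | .key _, _ => subset_rfl
  | .glob _, _ => subset_rfl
  | .loc n, k => h k n
  | .s p q, k => (Set.biUnion_subset_biUnion_left (interp_mono w h p k)).trans
      (Set.iUnion₂_mono fun k' _ => interp_mono w h q k')

-- In the `s` case the two witnesses may come from different members of the family;
-- directedness supplies one member containing both.
theorem interp_iUnion_of_directed {ι : Type*} [Nonempty ι] (w : World K G N)
    {L : ι → K → N → Set K} (hL : Directed (· ≤ ·) L) :
    ∀ (p : PExp K G N) (k : K),
      interp w (fun k' n' => ⋃ i, L i k' n') p k = ⋃ i, interp w (L i) p k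
  | .key _, _ => (Set.iUnion_const _).symm
  | .glob _, _ => (Set.iUnion_const _).symm
  | .loc _, _ => rfl
  | .s p q, k => by
    refine subset_antisymm ?_ (Set.iUnion_subset fun i =>
      interp_mono w (fun k' n' => Set.subset_iUnion (L · k' n') i) (.s p q) k)
    simp only [interp, interp_iUnion_of_directed w hL p, interp_iUnion_of_directed w hL q,
      Set.biUnion_iUnion, Set.iUnion_subset_iff]
    intro i k' hk' j x hx
    obtain ⟨m, him, hjm⟩ := hL i j
    exact Set.mem_iUnion.2
      ⟨m, Set.mem_biUnion (interp_mono w him p k hk') (interp_mono w hjm q k' hx)⟩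

theorem Tw_mono (w : World K G N) : Monotone (Tw w) :=
  fun _ _ h k _ => Set.iUnion₂_mono fun p _ => interp_mono w h p k

theorem Tw_iUnion_of_directed {ι : Type*} [Nonempty ι] (w : World K G N)
    {L : ι → K → N → Set K} (hL : Directed (· ≤ ·) L) (k : K) (n : N) :
    Tw w (fun k' n' => ⋃ i, L i k' n') k n = ⋃ i, Tw w (L i) k n := by
  simp only [Tw, interp_iUnion_of_directed w hL, Set.iUnion_comm (ι' := ι)]

theorem Tw_continuous_general (w : World K G N) :
    (∀ l l' : K → N → Set K, (∀ (k : K) (n : N), l k n ⊆ l' k n) →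
      ∀ (k : K) (n : N), Tw w l k n ⊆ Tw w l' k n) ∧
    (∀ lseq : ℕ → K → N → Set K, (∀ (m : ℕ) (k : K) (n : N), lseq m k n ⊆ lseq (m + 1) k n) →
      ∀ (k : K) (n : N), Tw w (fun k' n' => ⋃ m : ℕ, lseq m k' n') k n = ⋃ m : ℕ, Tw w (lseq m) k n) :=
  ⟨fun _ _ h => Tw_mono w h, fun _ h =>
    Tw_iUnion_of_directed w (monotone_nat_of_le_succ fun m k n => h m k n).directed_le⟩

/-- Lemma A.2: `T_w` is continuous: it is monotone, and it carries
the pointwise supremum of any increasing sequence of local name assignments to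
the pointwise supremum of the image sequence. -/
theorem Tw_continuous [Nonempty K] (w : World K G N) :
    (∀ l l' : K → N → Set K, (∀ (k : K) (n : N), l k n ⊆ l' k n) →
      ∀ (k : K) (n : N), Tw w l k n ⊆ Tw w l' k n) ∧
    (∀ lseq : ℕ → K → N → Set K, (∀ (m : ℕ) (k : K) (n : N), lseq m k n ⊆ lseq (m + 1) k n) →
      ∀ (k : K) (n : N), Tw w (fun k' n' => ⋃ m : ℕ, lseq m k' n') k n = ⋃ m : ℕ, Tw w (lseq m) k n) :=
  Tw_continuous_general w
end

section
/- Theorem 3.2 (finite case): If the set K of keys is finite, then the axiom system AX_fin is sound and complete with respect to the open semantics of LLNC: a formula φ is provable in AX_fin if and only if φ is o-valid. -/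
variable {K G N : Type*}

/-- `lw` is the (unique) minimal local name assignment consistent with `w`. -/
def IsMinConsistent (w : World K G N) (lw : K → N → Set K) : Prop :=
  Consistent w lw ∧ ∀ l, Consistent w l → ∀ (k : K) (n : N), lw k n ⊆ l k n

/-- Open-semantics satisfaction: satisfaction with a consistent assignment. -/
def OSat (w : World K G N) (l : K → N → Set K) (k : K) (φ : Fml K G N) : Prop :=
  Sat w l k φ ∧ Consistent w l

/-- `φ` is o-satisfiable. -/
def OSatisfiable (φ : Fml K G N) : Prop :=
  ∃ (w : World K G N) (l : K → N → Set K) (k : K), OSat w l k φ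

/-- `φ` is o-valid: no triple satisfies `¬φ` under the open semantics. -/
def OValid (φ : Fml K G N) : Prop :=
  ¬ ∃ (w : World K G N) (l : K → N → Set K) (k : K), OSat w l k (.not φ)

/-- `φ` is c-satisfiable: some world and key satisfy it under the minimal
consistent local name assignment of the world. -/
def CSatisfiable (φ : Fml K G N) : Prop :=
  ∃ (w : World K G N) (k : K) (lw : K → N → Set K), IsMinConsistent w lw ∧ Sat w lw k φ

/-- `φ` is c-valid: every world and key satisfy it under the minimal
consistent local name assignment of the world. -/
def CValid (φ : Fml K G N) : Prop :=
  ∀ (w : World K G N) (k : K) (lw : K → N → Set K), IsMinConsistent w lw → Sat w lw k φ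

/-- Material implication, as a classical abbreviation. -/
def Fml.imp (φ ψ : Fml K G N) : Fml K G N := .not (.and φ (.not ψ))

/-- Disjunction, as a classical abbreviation. -/
def Fml.or (φ ψ : Fml K G N) : Fml K G N := .not (.and (.not φ) (.not ψ))

/-- Biconditional, as a classical abbreviation. -/
def Fml.iff (φ ψ : Fml K G N) : Fml K G N := .and (φ.imp ψ) (ψ.imp φ)

/-- Boolean evaluation of a formula treating `▷`- and `cert`-formulas as atoms. -/
def evalB (v : Fml K G N → Bool) : Fml K G N → Bool
  | .not φ => !(evalB v φ)
  | .and φ ψ => evalB v φ && evalB v ψ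
  | φ => v φ

/-- `φ` is an instance of a propositional tautology. -/
def Tautology (φ : Fml K G N) : Prop := ∀ v : Fml K G N → Bool, evalB v φ = true

/-- Global identifiers: keys and global names. -/
def IsGlobalId : PExp K G N → Prop
  | .key _ => True
  | .glob _ => True
  | _ => False

/-- The axiom system `AX_inf`. -/
inductive PrvInf : Fml K G N → Prop
  | taut {φ : Fml K G N} : Tautology φ → PrvInf φ
  | refl (p : PExp K G N) : PrvInf (.bdto p p)
  | trans (p q r : PExp K G N) :
      PrvInf ((Fml.bdto p q).imp ((Fml.bdto q r).imp (.bdto p r)))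
  | leftMono (p q r : PExp K G N) :
      PrvInf ((Fml.bdto p q).imp (.bdto (p.s r) (q.s r)))
  | assoc₁ (p q r : PExp K G N) : PrvInf (.bdto ((p.s q).s r) (p.s (q.s r)))
  | assoc₂ (p q r : PExp K G N) : PrvInf (.bdto (p.s (q.s r)) ((p.s q).s r))
  | keyGlob (k : K) (g : PExp K G N) (hg : IsGlobalId g) :
      PrvInf (.bdto ((PExp.key k).s g) g)
  | glob (p : PExp K G N) (k : K) (g : PExp K G N) (hg : IsGlobalId g) :
      PrvInf ((Fml.bdto (p.s (.key k)) (.key k)).imp (.bdto (p.s g) g))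
  | convGlob (p g : PExp K G N) (hg : IsGlobalId g) : PrvInf (.bdto g (p.s g))
  | keyLink (k : K) (n : N) (r : PExp K G N) :
      PrvInf ((Fml.cert k (.bdto (.loc n) r)).imp
        (.bdto ((PExp.key k).s (.loc n)) ((PExp.key k).s r)))
  | nonempA (p : PExp K G N) (k₁ k : K) :
      PrvInf ((Fml.bdto p (.key k₁)).imp (.bdto (p.s (.key k)) (.key k)))
  | nonempB (p q : PExp K G N) (k : K) :
      PrvInf ((Fml.not (.bdto p q)).imp (.bdto (q.s (.key k)) (.key k)))
  | nonempC (p q : PExp K G N) (k₁ k : K) :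
      PrvInf ((Fml.bdto (p.s q) (.key k₁)).imp (.bdto (p.s (.key k)) (.key k)))
  | nonempD (p : PExp K G N) (k k' : K) :
      PrvInf ((Fml.and (.bdto (p.s (.key k)) (.key k)) (.bdto (.key k') p)).imp
        (.bdto p (.key k')))
  | keyDist (k₁ k₂ : K) (hne : k₁ ≠ k₂) : PrvInf (.not (.bdto (.key k₁) (.key k₂)))
  | mp {φ ψ : Fml K G N} : PrvInf φ → PrvInf (φ.imp ψ) → PrvInf ψ

/-- Disjunction of the nonempty list `φ :: l` of formulas. -/
def bigOr (φ : Fml K G N) : List (Fml K G N) → Fml K G N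
  | [] => φ
  | ψ :: rest => φ.or (bigOr ψ rest)

/-- The disjunction `⋁_{k ∈ K} f k`, where `k₀ :: L` enumerates `K`. -/
def disjOver (f : K → Fml K G N) (k₀ : K) (L : List K) : Fml K G N :=
  bigOr (f k₀) (L.map f)

/-- The axiom system `AX_fin`: `AX_inf` together with Witnesses and
Current Principal (finite disjunctions over an enumeration of `K`). -/
inductive PrvFin : Fml K G N → Prop
  | taut {φ : Fml K G N} : Tautology φ → PrvFin φ
  | refl (p : PExp K G N) : PrvFin (.bdto p p)
  | trans (p q r : PExp K G N) :
      PrvFin ((Fml.bdto p q).imp ((Fml.bdto q r).imp (.bdto p r)))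
  | leftMono (p q r : PExp K G N) :
      PrvFin ((Fml.bdto p q).imp (.bdto (p.s r) (q.s r)))
  | assoc₁ (p q r : PExp K G N) : PrvFin (.bdto ((p.s q).s r) (p.s (q.s r)))
  | assoc₂ (p q r : PExp K G N) : PrvFin (.bdto (p.s (q.s r)) ((p.s q).s r))
  | keyGlob (k : K) (g : PExp K G N) (hg : IsGlobalId g) :
      PrvFin (.bdto ((PExp.key k).s g) g)
  | glob (p : PExp K G N) (k : K) (g : PExp K G N) (hg : IsGlobalId g) :
      PrvFin ((Fml.bdto (p.s (.key k)) (.key k)).imp (.bdto (p.s g) g))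
  | convGlob (p g : PExp K G N) (hg : IsGlobalId g) : PrvFin (.bdto g (p.s g))
  | keyLink (k : K) (n : N) (r : PExp K G N) :
      PrvFin ((Fml.cert k (.bdto (.loc n) r)).imp
        (.bdto ((PExp.key k).s (.loc n)) ((PExp.key k).s r)))
  | nonempA (p : PExp K G N) (k₁ k : K) :
      PrvFin ((Fml.bdto p (.key k₁)).imp (.bdto (p.s (.key k)) (.key k)))
  | nonempB (p q : PExp K G N) (k : K) :
      PrvFin ((Fml.not (.bdto p q)).imp (.bdto (q.s (.key k)) (.key k)))
  | nonempC (p q : PExp K G N) (k₁ k : K) :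
      PrvFin ((Fml.bdto (p.s q) (.key k₁)).imp (.bdto (p.s (.key k)) (.key k)))
  | nonempD (p : PExp K G N) (k k' : K) :
      PrvFin ((Fml.and (.bdto (p.s (.key k)) (.key k)) (.bdto (.key k') p)).imp
        (.bdto p (.key k')))
  | keyDist (k₁ k₂ : K) (hne : k₁ ≠ k₂) : PrvFin (.not (.bdto (.key k₁) (.key k₂)))
  | witnesses₁ (p q : PExp K G N) (k₀ : K) (L : List K)
      (hnd : (k₀ :: L).Nodup) (hall : ∀ k : K, k ∈ k₀ :: L) :
      PrvFin ((Fml.not (.bdto p q)).imp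
        (disjOver (fun k => Fml.and (.not (.bdto p (.key k))) (.bdto q (.key k))) k₀ L))
  | witnesses₂ (p q : PExp K G N) (k₁ : K) (k₀ : K) (L : List K)
      (hnd : (k₀ :: L).Nodup) (hall : ∀ k : K, k ∈ k₀ :: L) :
      PrvFin ((Fml.bdto (p.s q) (.key k₁)).imp
        (disjOver (fun k => Fml.and (.bdto p (.key k))
          (.bdto ((PExp.key k).s q) (.key k₁))) k₀ L))
  | currentPrincipal (nsel : K → N) (lsel : K → K) (k₀ : K) (L : List K)
      (hnd : (k₀ :: L).Nodup) (hall : ∀ k : K, k ∈ k₀ :: L) :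
      PrvFin (disjOver (fun k => Fml.iff (.bdto (.loc (nsel k)) (.key (lsel k)))
        (.bdto ((PExp.key k).s (.loc (nsel k))) (.key (lsel k)))) k₀ L)
  | mp {φ ψ : Fml K G N} : PrvFin φ → PrvFin (φ.imp ψ) → PrvFin ψ

/-!
Soundness is checked axiom by axiom. Tautologies are handled once and for all: satisfaction at a
fixed world, assignment and key is a Boolean valuation (`IsBoolValuation`), and so is membership
in a complete theory, which is how the propositional part of completeness is handled as well.

For completeness, extend `¬φ` for a non-theorem `φ` to a complete theory `Γ` (Lindenbaum) and
let key `k` interpret `p` as the set of keys `k'` with `k's p ▷ k'` in `Γ`. The Witnesses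
axioms, whose disjunctions over `K` need `K` finite, make `'s` act as relational composition in
this model, and the Current Principal axiom yields a key `k₀` such that `k₀'s p` and `p` bind the
same keys. At `k₀`, `p ▷ q` then holds exactly when it lies in `Γ` (by the first Witnesses
axiom), so `¬φ` is satisfied there; Key Linking makes the assignment consistent.
-/

local infix:60 " ▷ " => Fml.bdto
local infixl:70 " ’s " => PExp.s

structure IsBoolValuation (P : Fml K G N → Prop) : Prop where
  not_iff : ∀ φ, P (.not φ) ↔ ¬ P φ
  and_iff : ∀ φ ψ, P (.and φ ψ) ↔ P φ ∧ P ψ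

def impList (L : List (Fml K G N)) (ψ : Fml K G N) : Fml K G N := L.foldr Fml.imp ψ

namespace IsBoolValuation

variable {P : Fml K G N → Prop} (hP : IsBoolValuation P)
include hP

theorem imp_iff (φ ψ : Fml K G N) : P (φ.imp ψ) ↔ (P φ → P ψ) := by
  simp only [Fml.imp, hP.not_iff, hP.and_iff]
  tauto

theorem iff_iff (φ ψ : Fml K G N) : P (φ.iff ψ) ↔ (P φ ↔ P ψ) := by
  simp only [Fml.iff, hP.and_iff, hP.imp_iff]
  tauto

theorem impList_iff (L : List (Fml K G N)) (ψ : Fml K G N) :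
    P (impList L ψ) ↔ ((∀ χ ∈ L, P χ) → P ψ) := by
  induction L with
  | nil => simp [impList]
  | cons χ L ih =>
    simp only [impList, List.foldr_cons, hP.imp_iff, List.forall_mem_cons] at ih ⊢
    rw [ih]
    tauto

theorem bigOr_iff (φ : Fml K G N) (L : List (Fml K G N)) :
    P (bigOr φ L) ↔ ∃ ψ ∈ φ :: L, P ψ := by
  induction L generalizing φ with
  | nil => simp [bigOr]
  | cons ψ L ih =>
    simp only [bigOr, Fml.or, hP.not_iff, hP.and_iff, ih, List.mem_cons, exists_eq_or_imp]
    rw [not_and_or, not_not, not_not]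

theorem disjOver_iff {f : K → Fml K G N} {k₀ : K} {L : List K} (hL : ∀ k, k ∈ k₀ :: L) :
    P (disjOver f k₀ L) ↔ ∃ k, P (f k) := by
  simp only [disjOver, hP.bigOr_iff, ← List.map_cons, List.mem_map, exists_exists_and_eq_and]
  exact ⟨fun ⟨k, _, hk⟩ => ⟨k, hk⟩, fun ⟨k, hk⟩ => ⟨k, hL k, hk⟩⟩

theorem of_tautology {φ : Fml K G N} (h : Tautology φ) : P φ := by
  classical
  have evalB_decide (ψ : Fml K G N) : evalB (fun χ => decide (P χ)) ψ = decide (P ψ) := by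
    induction ψ with
    | bdto | cert => rfl
    | not ψ ih => simp [evalB, ih, hP.not_iff]
    | and ψ χ ihψ ihχ => simp [evalB, ihψ, ihχ, hP.and_iff]
  simpa [evalB_decide] using h fun ψ => decide (P ψ)

end IsBoolValuation

def PropEntails (L : List (Fml K G N)) (ψ : Fml K G N) : Prop :=
  ∀ P, IsBoolValuation P → (∀ χ ∈ L, P χ) → P ψ

theorem PropEntails.tautology_impList {L : List (Fml K G N)} {ψ : Fml K G N}
    (h : PropEntails L ψ) : Tautology (impList L ψ) := fun v => by
  have hv : IsBoolValuation fun φ => evalB v φ = true := ⟨by simp [evalB], by simp [evalB]⟩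
  exact (hv.impList_iff L ψ).2 (h _ hv)

theorem PrvFin.of_impList {L : List (Fml K G N)} {ψ : Fml K G N} (h : PrvFin (impList L ψ))
    (hL : ∀ χ ∈ L, PrvFin χ) : PrvFin ψ := by
  induction L with
  | nil => exact h
  | cons χ L ih =>
    exact ih ((hL χ List.mem_cons_self).mp h) fun χ' hχ' => hL χ' (List.mem_cons_of_mem _ hχ')

section Soundness

variable {w : World K G N} {l : K → N → Set K}

theorem isBoolValuation_sat (w : World K G N) (l : K → N → Set K) (k : K) :
    IsBoolValuation (Sat w l k) :=
  ⟨fun _ => Iff.rfl, fun _ _ => Iff.rfl⟩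

theorem sat_bdto_key {k k' : K} {p : PExp K G N} :
    Sat w l k (p ▷ .key k') ↔ k' ∈ interp w l p k :=
  Set.singleton_subset_iff

theorem mem_interp_s_iff {k k' : K} {p q : PExp K G N} :
    k' ∈ interp w l (p ’s q) k ↔ ∃ a ∈ interp w l p k, k' ∈ interp w l q a := by
  simp [interp]

@[simp] theorem interp_key_s (k k' : K) (p : PExp K G N) :
    interp w l (.key k' ’s p) k = interp w l p k' := by
  simp [interp]

theorem interp_s_assoc (p q r : PExp K G N) (k : K) :
    interp w l (p ’s q ’s r) k = interp w l (p ’s (q ’s r)) k := by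
  ext
  simp only [mem_interp_s_iff]
  aesop

theorem mem_interp_s_key_iff {k k' : K} {p : PExp K G N} :
    k' ∈ interp w l (p ’s .key k') k ↔ (interp w l p k).Nonempty := by
  simp [interp, Set.Nonempty]

theorem IsGlobalId.interp_eq {g : PExp K G N} (hg : IsGlobalId g) (k k' : K) :
    interp w l g k = interp w l g k' := by
  cases g <;> first | rfl | exact hg.elim

theorem IsGlobalId.interp_s_subset {g : PExp K G N} (hg : IsGlobalId g) (p : PExp K G N)
    (k : K) : interp w l (p ’s g) k ⊆ interp w l g k := by
  simp only [interp, Set.iUnion₂_subset_iff]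
  exact fun k' _ => (hg.interp_eq k' k).subset

theorem IsGlobalId.interp_s {g p : PExp K G N} (hg : IsGlobalId g) {k : K}
    (hp : (interp w l p k).Nonempty) : interp w l (p ’s g) k = interp w l g k := by
  simp only [interp]
  simp_rw [hg.interp_eq _ k]
  exact Set.biUnion_const hp _

theorem PrvFin.sat {φ : Fml K G N} (h : PrvFin φ) (hl : Consistent w l) (k : K) :
    Sat w l k φ := by
  have hv := isBoolValuation_sat w l k
  induction h with
  | taut h => exact hv.of_tautology h
  | refl p => exact subset_rfl
  | trans p q r => exact (hv.imp_iff _ _).2 fun hpq => (hv.imp_iff _ _).2 fun hqr => hqr.trans hpq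
  | leftMono p q r => exact (hv.imp_iff _ _).2 Set.biUnion_subset_biUnion_left
  | assoc₁ p q r => exact (interp_s_assoc p q r k).symm.subset
  | assoc₂ p q r => exact (interp_s_assoc p q r k).subset
  | keyGlob k' g hg => exact (hg.interp_s (by simp [interp])).symm.subset
  | glob p k' g hg =>
    exact (hv.imp_iff _ _).2 fun h =>
      (hg.interp_s (mem_interp_s_key_iff.1 (sat_bdto_key.1 h))).symm.subset
  | convGlob p g hg => exact hg.interp_s_subset p k
  | keyLink k' n r =>
    refine (hv.imp_iff _ _).2 fun h => ?_
    simpa only [Sat, interp_key_s] using hl k' n r h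
  | nonempA p k₁ k' =>
    exact (hv.imp_iff _ _).2 fun h => sat_bdto_key.2 (mem_interp_s_key_iff.2 ⟨k₁, sat_bdto_key.1 h⟩)
  | nonempB p q k' =>
    refine (hv.imp_iff _ _).2 fun h => sat_bdto_key.2 (mem_interp_s_key_iff.2 ?_)
    exact (Set.nonempty_of_not_subset h).mono Set.sdiff_subset
  | nonempC p q k₁ k' =>
    refine (hv.imp_iff _ _).2 fun h => sat_bdto_key.2 (mem_interp_s_key_iff.2 ?_)
    obtain ⟨a, ha, -⟩ := mem_interp_s_iff.1 (sat_bdto_key.1 h)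
    exact ⟨a, ha⟩
  | nonempD p k' k'' =>
    refine (hv.imp_iff _ _).2 fun h => sat_bdto_key.2 ?_
    obtain ⟨hne, hsub⟩ := (hv.and_iff _ _).1 h
    obtain ⟨a, ha⟩ := mem_interp_s_key_iff.1 (sat_bdto_key.1 hne)
    exact (hsub ha : a = k'') ▸ ha
  | keyDist k₁ k₂ hne => exact (hv.not_iff _).2 fun h => hne (sat_bdto_key.1 h).symm
  | witnesses₁ p q k₀ L hnd hall =>
    refine (hv.imp_iff _ _).2 fun h => (hv.disjOver_iff hall).2 ?_
    obtain ⟨k', hq, hp⟩ := Set.not_subset.1 ((hv.not_iff _).1 h)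
    exact ⟨k', (hv.and_iff _ _).2 ⟨(hv.not_iff _).2 (mt sat_bdto_key.1 hp), sat_bdto_key.2 hq⟩⟩
  | witnesses₂ p q k₁ k₀ L hnd hall =>
    refine (hv.imp_iff _ _).2 fun h => (hv.disjOver_iff hall).2 ?_
    obtain ⟨k', hp, hq⟩ := mem_interp_s_iff.1 (sat_bdto_key.1 h)
    exact ⟨k', (hv.and_iff _ _).2 ⟨sat_bdto_key.2 hp, sat_bdto_key.2 (by simpa using hq)⟩⟩
  | currentPrincipal nsel lsel k₀ L hnd hall =>
    exact (hv.disjOver_iff hall).2 ⟨k, by simp [hv.iff_iff, sat_bdto_key]⟩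
  | mp _ _ ih₁ ih₂ => exact (hv.imp_iff _ _).1 ih₂ ih₁

end Soundness

section Derivations

def Derives (T : Set (Fml K G N)) (ψ : Fml K G N) : Prop :=
  ∃ L : List (Fml K G N), (∀ χ ∈ L, χ ∈ T) ∧ PrvFin (impList L ψ)

variable {T : Set (Fml K G N)} {φ ψ : Fml K G N}

theorem Derives.of_mem (h : ψ ∈ T) : Derives T ψ :=
  ⟨[ψ], by simpa using h,
    .taut <| PropEntails.tautology_impList fun _ _ hL => hL ψ List.mem_cons_self⟩

theorem Derives.mp (hφ : Derives T φ) (hφψ : Derives T (φ.imp ψ)) : Derives T ψ := by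
  obtain ⟨L₁, hL₁, h₁⟩ := hφ
  obtain ⟨L₂, hL₂, h₂⟩ := hφψ
  refine ⟨L₁ ++ L₂, by simpa [or_imp, forall_and] using And.intro hL₁ hL₂, ?_⟩
  refine PrvFin.of_impList (L := [impList L₁ φ, impList L₂ (φ.imp ψ)])
    (.taut <| PropEntails.tautology_impList fun P hP h => ?_) (by simpa using And.intro h₁ h₂)
  simp only [List.forall_mem_cons, hP.impList_iff, hP.imp_iff, List.mem_append] at h ⊢
  grind

theorem Derives.of_propEntails {L : List (Fml K G N)} (hL : ∀ χ ∈ L, Derives T χ)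
    (h : PropEntails L ψ) : Derives T ψ := by
  induction L generalizing ψ with
  | nil => exact ⟨[], by simp, .taut h.tautology_impList⟩
  | cons χ L ih =>
    refine (hL χ List.mem_cons_self).mp (ih (fun χ' hχ' => hL χ' (List.mem_cons_of_mem _ hχ'))
      fun P hP hLP => (hP.imp_iff _ _).2 fun hχ => h P hP ?_)
    exact List.forall_mem_cons.2 ⟨hχ, hLP⟩

theorem Derives.imp_of_insert (h : Derives (insert φ T) ψ) : Derives T (φ.imp ψ) := by
  classical
  obtain ⟨L, hL, hψ⟩ := h
  refine ⟨L.filter (· ∈ T), by simp, PrvFin.of_impList (L := [impList L ψ])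
    (.taut <| PropEntails.tautology_impList fun P hP h => ?_) (by simpa using hψ)⟩
  have hL' : ∀ χ ∈ L, χ = φ ∨ χ ∈ T := hL
  simp only [List.forall_mem_cons, hP.impList_iff, hP.imp_iff,
    List.mem_filter, decide_eq_true_eq] at h ⊢
  grind

theorem Derives.exists_mem_of_isChain {c : Set (Set (Fml K G N))} (hc : IsChain (· ⊆ ·) c)
    (hne : c.Nonempty) (h : Derives (⋃₀ c) ψ) : ∃ U ∈ c, Derives U ψ := by
  obtain ⟨L, hL, hψ⟩ := h
  obtain ⟨U, hU, hLU⟩ :=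
    hc.directedOn.exists_mem_subset_of_finite_of_subset_sUnion hne L.finite_toSet hL
  exact ⟨U, hU, L, hLU, hψ⟩

end Derivations

section CompleteTheories

structure IsCompleteTheory (Γ : Set (Fml K G N)) : Prop where
  isBoolValuation : IsBoolValuation (· ∈ Γ)
  mem_of_prvFin : ∀ {φ}, PrvFin φ → φ ∈ Γ

theorem isCompleteTheory_of_maximal {φ : Fml K G N} {Γ : Set (Fml K G N)}
    (hΓ : Maximal (fun T => ¬ Derives T φ) Γ) : IsCompleteTheory Γ := by
  have mem_of_derives {ψ} (h : Derives Γ ψ) : ψ ∈ Γ :=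
    hΓ.mem_of_prop_insert fun h' => hΓ.prop (h.mp h'.imp_of_insert)
  have mem_of_propEntails {L ψ} (hL : ∀ χ ∈ L, χ ∈ Γ) (h : PropEntails L ψ) : ψ ∈ Γ :=
    mem_of_derives (.of_propEntails (fun χ hχ => .of_mem (hL χ hχ)) h)
  have derives_imp_of_not_mem {ψ} (h : ψ ∉ Γ) : Derives Γ (ψ.imp φ) :=
    (not_not.1 fun h' => h (hΓ.mem_of_prop_insert h')).imp_of_insert
  have not_iff ψ : ψ.not ∈ Γ ↔ ψ ∉ Γ := by
    refine ⟨fun hn hψ => hΓ.prop ?_, fun hψ => not_not.1 fun hn => hΓ.prop ?_⟩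
    · refine .of_propEntails (L := [ψ, ψ.not]) (by simpa using ⟨.of_mem hψ, .of_mem hn⟩)
        fun P hP h => ?_
      simp [hP.not_iff] at h
    · refine .of_propEntails (L := [ψ.imp φ, ψ.not.imp φ])
        (by simpa using ⟨derives_imp_of_not_mem hψ, derives_imp_of_not_mem hn⟩) fun P hP h => ?_
      simp [hP.not_iff, hP.imp_iff] at h
      tauto
  have and_iff ψ χ : ψ.and χ ∈ Γ ↔ ψ ∈ Γ ∧ χ ∈ Γ := by
    refine ⟨fun h => ⟨?_, ?_⟩, fun ⟨hψ, hχ⟩ => ?_⟩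
    · exact mem_of_propEntails (L := [ψ.and χ]) (by simpa using h) fun P hP hL =>
        ((hP.and_iff ψ χ).1 (hL _ List.mem_cons_self)).1
    · exact mem_of_propEntails (L := [ψ.and χ]) (by simpa using h) fun P hP hL =>
        ((hP.and_iff ψ χ).1 (hL _ List.mem_cons_self)).2
    · exact mem_of_propEntails (L := [ψ, χ]) (by simpa using ⟨hψ, hχ⟩) fun P hP hL =>
        (hP.and_iff ψ χ).2 ⟨hL ψ (by simp), hL χ (by simp)⟩
  exact ⟨⟨not_iff, and_iff⟩, fun h => mem_of_derives ⟨[], by simp, h⟩⟩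

theorem exists_isCompleteTheory_not_mem {φ : Fml K G N} (h : ¬ PrvFin φ) :
    ∃ Γ, IsCompleteTheory Γ ∧ φ ∉ Γ := by
  obtain ⟨Γ, -, hΓ⟩ := zorn_subset_nonempty {T | ¬ Derives T φ}
    (fun c hc hchain hne => ⟨⋃₀ c, fun hd => by
      obtain ⟨U, hU, hd⟩ := hd.exists_mem_of_isChain hchain hne
      exact hc hU hd, fun _ => Set.subset_sUnion_of_mem⟩) ∅
    (fun ⟨L, hL, hφ⟩ => h (hφ.of_impList fun χ hχ => (hL χ hχ).elim))
  exact ⟨Γ, isCompleteTheory_of_maximal hΓ, fun hφ => hΓ.prop (.of_mem hφ)⟩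

variable {Γ : Set (Fml K G N)}

def IsCurrentPrincipal (Γ : Set (Fml K G N)) (k₀ : K) : Prop :=
  ∀ n k, .loc n ▷ .key k ∈ Γ ↔ .key k₀ ’s .loc n ▷ .key k ∈ Γ

namespace IsCompleteTheory

variable (hΓ : IsCompleteTheory Γ)
include hΓ

theorem mem_of_imp_mem {φ ψ : Fml K G N} (h : φ.imp ψ ∈ Γ) (hφ : φ ∈ Γ) : ψ ∈ Γ :=
  (hΓ.isBoolValuation.imp_iff _ _).1 h hφ

theorem mp {φ ψ : Fml K G N} (h : PrvFin (φ.imp ψ)) (hφ : φ ∈ Γ) : ψ ∈ Γ :=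
  hΓ.mem_of_imp_mem (hΓ.mem_of_prvFin h) hφ

theorem bdto_trans {p q r : PExp K G N} (hpq : p ▷ q ∈ Γ) (hqr : q ▷ r ∈ Γ) : p ▷ r ∈ Γ :=
  hΓ.mem_of_imp_mem (hΓ.mp (.trans p q r) hpq) hqr

theorem bdto_congr_left {p p' r : PExp K G N} (h : p ▷ p' ∈ Γ) (h' : p' ▷ p ∈ Γ) :
    p ▷ r ∈ Γ ↔ p' ▷ r ∈ Γ :=
  ⟨hΓ.bdto_trans h', hΓ.bdto_trans h⟩

theorem s_assoc_bdto_iff {p q r s : PExp K G N} : p ’s q ’s r ▷ s ∈ Γ ↔ p ’s (q ’s r) ▷ s ∈ Γ :=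
  hΓ.bdto_congr_left (hΓ.mem_of_prvFin (.assoc₁ p q r)) (hΓ.mem_of_prvFin (.assoc₂ p q r))

theorem key_s_bdto_iff {g r : PExp K G N} (hg : IsGlobalId g) (k : K) :
    .key k ’s g ▷ r ∈ Γ ↔ g ▷ r ∈ Γ :=
  hΓ.bdto_congr_left (hΓ.mem_of_prvFin (.keyGlob k g hg))
    (hΓ.mem_of_prvFin (.convGlob (.key k) g hg))

theorem key_bdto_key_iff {k k' : K} : .key k ▷ .key k' ∈ Γ ↔ k = k' := by
  refine ⟨fun h => not_not.1 fun hne => ?_, fun h => h ▸ hΓ.mem_of_prvFin (.refl _)⟩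
  exact (hΓ.isBoolValuation.not_iff _).1 (hΓ.mem_of_prvFin (.keyDist k k' hne)) h

variable [Finite K] [Nonempty K]

theorem exists_mem_of_disjOver {f : K → Fml K G N}
    (h : ∀ k₀ L, (k₀ :: L).Nodup → (∀ k, k ∈ k₀ :: L) → disjOver f k₀ L ∈ Γ) : ∃ k, f k ∈ Γ := by
  obtain ⟨_ | ⟨k₀, L⟩, hnd, hall⟩ := Finite.exists_univ_list K
  · exact (List.not_mem_nil (hall (Classical.arbitrary K))).elim
  · exact (hΓ.isBoolValuation.disjOver_iff hall).1 (h k₀ L hnd hall)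

theorem s_bdto_key_iff {p q : PExp K G N} {k' : K} :
    p ’s q ▷ .key k' ∈ Γ ↔ ∃ k, p ▷ .key k ∈ Γ ∧ .key k ’s q ▷ .key k' ∈ Γ := by
  refine ⟨fun h => ?_, fun ⟨k, hp, hq⟩ => hΓ.bdto_trans (hΓ.mp (.leftMono p (.key k) q) hp) hq⟩
  obtain ⟨k, hk⟩ := hΓ.exists_mem_of_disjOver fun k₀ L hnd hall =>
    hΓ.mp (.witnesses₂ p q k' k₀ L hnd hall) h
  exact ⟨k, (hΓ.isBoolValuation.and_iff _ _).1 hk⟩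

theorem bdto_iff_forall_key {p q : PExp K G N} :
    p ▷ q ∈ Γ ↔ ∀ k, q ▷ .key k ∈ Γ → p ▷ .key k ∈ Γ := by
  refine ⟨fun h k => hΓ.bdto_trans h, fun h => not_not.1 fun hpq => ?_⟩
  obtain ⟨k, hk⟩ := hΓ.exists_mem_of_disjOver fun k₀ L hnd hall =>
    hΓ.mp (.witnesses₁ p q k₀ L hnd hall) ((hΓ.isBoolValuation.not_iff _).2 hpq)
  simp only [hΓ.isBoolValuation.and_iff, hΓ.isBoolValuation.not_iff] at hk
  exact hk.1 (h k hk.2)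

theorem exists_isCurrentPrincipal : ∃ k₀, IsCurrentPrincipal Γ k₀ := by
  by_contra! h
  simp only [IsCurrentPrincipal, not_forall] at h
  choose n k hk using h
  obtain ⟨k₀, hk₀⟩ := hΓ.exists_mem_of_disjOver fun k₀ L hnd hall =>
    hΓ.mem_of_prvFin (.currentPrincipal n k k₀ L hnd hall)
  exact hk k₀ ((hΓ.isBoolValuation.iff_iff _ _).1 hk₀)

end IsCompleteTheory

theorem IsCurrentPrincipal.bdto_key_iff [Finite K] [Nonempty K] (hΓ : IsCompleteTheory Γ)
    {k₀ : K} (hk₀ : IsCurrentPrincipal Γ k₀) (p : PExp K G N) (k : K) :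
    p ▷ .key k ∈ Γ ↔ .key k₀ ’s p ▷ .key k ∈ Γ := by
  induction p generalizing k with
  | key k' => exact (hΓ.key_s_bdto_iff (g := .key k') trivial k₀).symm
  | glob g => exact (hΓ.key_s_bdto_iff (g := .glob g) trivial k₀).symm
  | loc n => exact hk₀ n k
  | s p q ihp _ =>
    rw [← hΓ.s_assoc_bdto_iff, hΓ.s_bdto_key_iff, hΓ.s_bdto_key_iff]
    exact exists_congr fun a => and_congr_left' (ihp a)

end CompleteTheories

section CanonicalModel

variable {Γ : Set (Fml K G N)}

def Fml.certified : Fml K G N → Set (Fml K G N)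
  | .bdto _ _ => ∅
  | .cert _ ψ => {ψ}
  | .not ψ => ψ.certified
  | .and ψ χ => ψ.certified ∪ χ.certified

theorem Fml.finite_certified (φ : Fml K G N) : φ.certified.Finite := by
  induction φ with
  | bdto => exact Set.finite_empty
  | cert => exact Set.finite_singleton _
  | not _ ih => exact ih
  | and _ _ ih₁ ih₂ => exact ih₁.union ih₂

/-- Only the certificates mentioned in `φ₀` are issued, which keeps the world finite; they are
the only ones the truth lemma consults. -/
def canonicalWorld (Γ : Set (Fml K G N)) (φ₀ : Fml K G N) : World K G N where
  beta g := {k | .glob g ▷ .key k ∈ Γ}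
  certs k := {ψ | ψ ∈ φ₀.certified ∧ .cert k ψ ∈ Γ}
  finite_certs := φ₀.finite_certified.subset (Set.iUnion_subset fun _ _ h => h.1)

def canonicalAssignment (Γ : Set (Fml K G N)) : K → N → Set K :=
  fun k n => {k' | .key k ’s .loc n ▷ .key k' ∈ Γ}

namespace IsCompleteTheory

variable (hΓ : IsCompleteTheory Γ) [Finite K] [Nonempty K]
include hΓ

theorem interp_canonical (φ₀ : Fml K G N) (p : PExp K G N) (k : K) :
    interp (canonicalWorld Γ φ₀) (canonicalAssignment Γ) p k =
      {k' | .key k ’s p ▷ .key k' ∈ Γ} := by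
  induction p generalizing k with
  | key k'' =>
    ext k'
    simp [interp, hΓ.key_s_bdto_iff (g := .key k'') trivial, hΓ.key_bdto_key_iff, eq_comm]
  | glob g =>
    ext k'
    simp [interp, canonicalWorld, hΓ.key_s_bdto_iff (g := .glob g) trivial]
  | loc n => rfl
  | s p q ihp ihq =>
    ext k'
    simp only [mem_interp_s_iff, ihp, ihq, Set.mem_ofPred_eq]
    rw [← hΓ.s_assoc_bdto_iff, hΓ.s_bdto_key_iff]

theorem consistent_canonical (φ₀ : Fml K G N) :
    Consistent (canonicalWorld Γ φ₀) (canonicalAssignment Γ) := by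
  intro k n p hcert
  have hlink := hΓ.mp (.keyLink k n p) hcert.2
  show interp _ _ p k ⊆ canonicalAssignment Γ k n
  rw [hΓ.interp_canonical]
  exact fun k' => hΓ.bdto_trans hlink

theorem sat_canonical_iff {φ₀ : Fml K G N} {k₀ : K} (hk₀ : IsCurrentPrincipal Γ k₀)
    (χ : Fml K G N) (hχ : χ.certified ⊆ φ₀.certified) :
    Sat (canonicalWorld Γ φ₀) (canonicalAssignment Γ) k₀ χ ↔ χ ∈ Γ := by
  induction χ with
  | bdto p q =>
    have interp_eq r : interp (canonicalWorld Γ φ₀) (canonicalAssignment Γ) r k₀ =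
        {k | r ▷ .key k ∈ Γ} := by
      rw [hΓ.interp_canonical]
      ext
      exact (hk₀.bdto_key_iff hΓ r _).symm
    show interp _ _ q k₀ ⊆ interp _ _ p k₀ ↔ _
    rw [interp_eq, interp_eq, hΓ.bdto_iff_forall_key]
    rfl
  | cert k ψ => exact ⟨And.right, fun h => ⟨hχ rfl, h⟩⟩
  | not ψ ih => exact (not_congr (ih hχ)).trans (hΓ.isBoolValuation.not_iff ψ).symm
  | and ψ χ ihψ ihχ =>
    refine (and_congr (ihψ ?_) (ihχ ?_)).trans (hΓ.isBoolValuation.and_iff ψ χ).symm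
    exacts [Set.subset_union_left.trans hχ, Set.subset_union_right.trans hχ]

end IsCompleteTheory

end CanonicalModel

/-- Theorem 3.2, finite case: if `K` is finite, `AX_fin` is sound
and complete for LLNC with respect to the open semantics. -/
theorem axFin_sound_complete [Finite K] [Nonempty K] (φ : Fml K G N) :
    PrvFin φ ↔ OValid φ := by
  refine ⟨fun h ⟨w, l, k, hsat, hl⟩ => hsat (h.sat hl k), fun h => ?_⟩
  by_contra hφ
  obtain ⟨Γ, hΓ, hφΓ⟩ := exists_isCompleteTheory_not_mem hφ
  obtain ⟨k₀, hk₀⟩ := hΓ.exists_isCurrentPrincipal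
  refine h ⟨canonicalWorld Γ φ, canonicalAssignment Γ, k₀, ?_, hΓ.consistent_canonical φ⟩
  exact (hΓ.sat_canonical_iff hk₀ φ.not subset_rfl).2 ((hΓ.isBoolValuation.not_iff φ).2 hφΓ)
end

section
/- Lemma A.4 (bound on the closure set P): For any formula φ, let P be the smallest set of principal expressions such that: (1) if p ▷ q is a subformula of φ then p, q ∈ P; (2) if k cert (n ▷ p) is a subformula of φ then k's n ∈ P and k's p ∈ P; (3) if p ∈ P then the left-associative variant of p is in P; (4) P is closed under subexpressions (if p's q ∈ P then p, q ∈ P); (5) if key k ∈ P and local name n ∈ P then k's n ∈ P. Then |P| < 2·|φ|². -/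
variable {K G N : Type*}

/-- Number of symbols in a principal expression. -/
def PExp.len : PExp K G N → ℕ
  | .key _ => 1
  | .glob _ => 1
  | .loc _ => 1
  | .s p q => p.len + q.len + 1

/-- Number of symbols in a formula. -/
def Fml.len : Fml K G N → ℕ
  | .bdto p q => p.len + q.len + 1
  | .cert _ φ => φ.len + 2
  | .not φ => φ.len + 1
  | .and φ ψ => φ.len + ψ.len + 1

/-- Keys appearing in a principal expression. -/
def PExp.keys : PExp K G N → Set K
  | .key k => {k}
  | .glob _ => ∅
  | .loc _ => ∅
  | .s p q => p.keys ∪ q.keys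

/-- Keys appearing in a formula. -/
def Fml.keys : Fml K G N → Set K
  | .bdto p q => p.keys ∪ q.keys
  | .cert k φ => insert k φ.keys
  | .not φ => φ.keys
  | .and φ ψ => φ.keys ∪ ψ.keys

/-- Global names appearing in a principal expression. -/
def PExp.globs : PExp K G N → Set G
  | .key _ => ∅
  | .glob g => {g}
  | .loc _ => ∅
  | .s p q => p.globs ∪ q.globs

/-- Global names appearing in a formula. -/
def Fml.globs : Fml K G N → Set G
  | .bdto p q => p.globs ∪ q.globs
  | .cert _ φ => φ.globs
  | .not φ => φ.globs
  | .and φ ψ => φ.globs ∪ ψ.globs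

/-- The set of subformulas of a formula. -/
def Fml.subfmls : Fml K G N → Set (Fml K G N)
  | .bdto p q => {.bdto p q}
  | .cert k φ => insert (.cert k φ) φ.subfmls
  | .not φ => insert (.not φ) φ.subfmls
  | .and φ ψ => insert (.and φ ψ) (φ.subfmls ∪ ψ.subfmls)

/-- `C_φ(k)`: the bindings `n ▷ p` such that `k cert (n ▷ p)` is a subformula
of `φ`. -/
def Cphi (φ : Fml K G N) (k : K) : Set (Fml K G N) :=
  {ψ | ∃ (n : N) (p : PExp K G N),
    ψ = Fml.bdto (.loc n) p ∧ Fml.cert k (Fml.bdto (.loc n) p) ∈ φ.subfmls}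

/-- The list of basic subexpressions of a principal expression, in order. -/
def PExp.atoms : PExp K G N → List (PExp K G N)
  | .s p q => p.atoms ++ q.atoms
  | p => [p]

/-- The left-associative variant of a principal expression: the same sequence of
basic expressions, with all applications of `'s` associated to the left. -/
def leftAssoc (p : PExp K G N) : PExp K G N :=
  match p.atoms with
  | [] => p
  | a :: rest => rest.foldl PExp.s a

/-- The smallest set `P` of principal expressions determined by the formula `φ`:
(1)–(2) it contains both sides of every `▷`-subformula and, for every
certificate subformula `k cert (n ▷ p)`, the expressions `k's n` and `k's p`;
(3) it is closed under left-associative variants; (4) under subexpressions; and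
(5) contains `k's n` whenever it contains the key `k` and local name `n`. -/
inductive InP (φ : Fml K G N) : PExp K G N → Prop
  | bdto_left {p q : PExp K G N} : Fml.bdto p q ∈ φ.subfmls → InP φ p
  | bdto_right {p q : PExp K G N} : Fml.bdto p q ∈ φ.subfmls → InP φ q
  | cert_name {k : K} {n : N} {p : PExp K G N} :
      Fml.cert k (.bdto (.loc n) p) ∈ φ.subfmls → InP φ ((PExp.key k).s (.loc n))
  | cert_expr {k : K} {n : N} {p : PExp K G N} :
      Fml.cert k (.bdto (.loc n) p) ∈ φ.subfmls → InP φ ((PExp.key k).s p)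
  | leftAssocVariant {p : PExp K G N} : InP φ p → InP φ (leftAssoc p)
  | sub_left {p q : PExp K G N} : InP φ (p.s q) → InP φ p
  | sub_right {p q : PExp K G N} : InP φ (p.s q) → InP φ q
  | key_loc {k : K} {n : N} :
      InP φ (.key k) → InP φ (.loc n) → InP φ ((PExp.key k).s (.loc n))

/-!
Call the two sides of a `▷`-subformula, and the expression `k's p` of a certificate
subformula `k cert (n ▷ p)`, the base expressions of `φ`, and let `T` be the total number of
atoms in them. Every element of `P` is a subexpression of a base expression, the
left-associated product of a contiguous block of the atom sequence, or `k's n` for a key `k`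
and a local name `n` in that sequence: these candidates include everything rules (1)–(2)
demand and are closed under rules (3)–(5). There are at most `2T` subexpressions, `T(T+1)/2`
blocks and `T²/4` key–name pairs, and `T < |φ|`, so fewer than `2|φ|²` candidates.
-/
namespace PExp

def subexprs : PExp K G N → List (PExp K G N)
  | .s p q => .s p q :: (p.subexprs ++ q.subexprs)
  | p => [p]

theorem length_subexprs (p : PExp K G N) : p.subexprs.length = p.len := by
  induction p <;> simp [subexprs, len, *]

theorem mem_subexprs_self (p : PExp K G N) : p ∈ p.subexprs := by
  cases p <;> simp [subexprs]

theorem subexprs_subset_of_mem {p q : PExp K G N} (h : q ∈ p.subexprs) :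
    q.subexprs ⊆ p.subexprs := by
  induction p with
  | s p₁ p₂ ih₁ ih₂ =>
    simp only [subexprs, List.mem_cons, List.mem_append] at h
    rcases h with rfl | h | h
    · exact List.Subset.refl _
    · exact fun x hx => by simp [subexprs, ih₁ h hx]
    · exact fun x hx => by simp [subexprs, ih₂ h hx]
  | _ => simp_all [subexprs]

theorem atoms_infix_of_mem_subexprs {p q : PExp K G N} (h : q ∈ p.subexprs) :
    q.atoms <:+: p.atoms := by
  induction p with
  | s p₁ p₂ ih₁ ih₂ =>
    simp only [subexprs, List.mem_cons, List.mem_append] at h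
    rcases h with rfl | h | h
    · exact List.infix_refl _
    · exact (ih₁ h).trans (List.prefix_append _ _).isInfix
    · exact (ih₂ h).trans (List.suffix_append _ _).isInfix
  | _ => simp_all [subexprs]

theorem len_pos (p : PExp K G N) : 0 < p.len := by
  cases p <;> simp [len]

theorem atoms_ne_nil (p : PExp K G N) : p.atoms ≠ [] := by
  induction p <;> simp [atoms, *]

theorem two_mul_length_atoms (p : PExp K G N) : 2 * p.atoms.length = p.len + 1 := by
  induction p with
  | s p q ihp ihq => simp only [atoms, len, List.length_append]; omega
  | _ => rfl

theorem sum_len_le (l : List (PExp K G N)) :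
    (l.map len).sum ≤ 2 * (l.flatMap atoms).length := by
  induction l with
  | nil => simp
  | cons p l ih =>
    have := two_mul_length_atoms p
    simp only [List.map_cons, List.sum_cons, List.flatMap_cons, List.length_append]
    omega

theorem s_not_mem_atoms (u v p : PExp K G N) : u.s v ∉ p.atoms := by
  induction p <;> simp_all [atoms]

theorem atoms_eq_singleton_of_mem {x p : PExp K G N} (h : x ∈ p.atoms) : x.atoms = [x] := by
  induction p with
  | s _ _ ih₁ ih₂ => simp only [atoms, List.mem_append] at h; exact h.elim ih₁ ih₂
  | _ => simp only [atoms, List.mem_singleton] at h; subst h; rfl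

theorem atoms_foldl (a : PExp K G N) (l : List (PExp K G N)) :
    (l.foldl s a).atoms = a.atoms ++ l.flatMap atoms := by
  induction l generalizing a <;> simp_all [atoms]

theorem leftAssoc_of_atoms_eq_cons {p a : PExp K G N} {l : List (PExp K G N)}
    (h : p.atoms = a :: l) : leftAssoc p = l.foldl s a := by
  rw [leftAssoc, h]

theorem leftAssoc_foldl {a : PExp K G N} {l : List (PExp K G N)}
    (h : ∀ x ∈ a :: l, x.atoms = [x]) : leftAssoc (l.foldl s a) = l.foldl s a := by
  refine leftAssoc_of_atoms_eq_cons ?_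
  rw [atoms_foldl, h a List.mem_cons_self,
    List.flatMap_congr fun x hx => h x (List.mem_cons_of_mem a hx), List.flatMap_singleton']
  rfl

def key? : PExp K G N → Option K
  | .key k => some k
  | _ => none

def loc? : PExp K G N → Option N
  | .loc n => some n
  | _ => none

@[simp] theorem key?_eq_some_iff {p : PExp K G N} {k : K} : p.key? = some k ↔ p = key k := by
  cases p <;> simp [key?]

@[simp] theorem loc?_eq_some_iff {p : PExp K G N} {n : N} : p.loc? = some n ↔ p = loc n := by
  cases p <;> simp [loc?]

theorem length_filterMap_key?_add_length_filterMap_loc?_le (l : List (PExp K G N)) :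
    (l.filterMap key?).length + (l.filterMap loc?).length ≤ l.length := by
  induction l with
  | nil => simp
  | cons p l ih => cases p <;> simp [List.filterMap_cons, key?, loc?] <;> omega

def keyLocPairs (l : List (PExp K G N)) : List (PExp K G N) :=
  (l.filterMap key? ×ˢ l.filterMap loc?).map fun kn => (key kn.1).s (loc kn.2)

theorem mem_keyLocPairs {l : List (PExp K G N)} {x : PExp K G N} :
    x ∈ keyLocPairs l ↔ ∃ k n, key k ∈ l ∧ loc n ∈ l ∧ (key k).s (loc n) = x := by
  simp [keyLocPairs, List.mem_product, and_assoc]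

theorem four_mul_length_keyLocPairs_le (l : List (PExp K G N)) :
    4 * (keyLocPairs l).length ≤ l.length ^ 2 := by
  have h := length_filterMap_key?_add_length_filterMap_loc?_le l
  rw [keyLocPairs, List.length_map, List.length_product]
  nlinarith [sq_nonneg ((l.filterMap key?).length - (l.filterMap loc?).length : ℤ)]

end PExp

namespace List

variable {α : Type*} (f : α → α → α)

def leftFolds : List α → List α
  | [] => []
  | a :: l => l.inits.map (·.foldl f a)

def infixFolds (l : List α) : List α :=
  l.tails.flatMap (leftFolds f)

variable {f}

theorem mem_infixFolds {x : α} {l : List α} :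
    x ∈ l.infixFolds f ↔ ∃ a w, a :: w <:+: l ∧ w.foldl f a = x := by
  constructor
  · intro h
    obtain ⟨_ | ⟨a, t⟩, ht, hx⟩ := mem_flatMap.1 h
    · simp [leftFolds] at hx
    · obtain ⟨w, hw, rfl⟩ := mem_map.1 hx
      exact ⟨a, w, ((prefix_cons_inj a).2 ((mem_inits _ _).1 hw)).isInfix.trans
        ((mem_tails _ _).1 ht).isInfix, rfl⟩
  · rintro ⟨a, w, h, rfl⟩
    obtain ⟨t, ⟨w', rfl⟩, hsuf⟩ := infix_iff_prefix_suffix.1 h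
    refine mem_flatMap.2 ⟨a :: (w ++ w'), (mem_tails _ _).2 hsuf, ?_⟩
    exact mem_map.2 ⟨w, (mem_inits _ _).2 (prefix_append _ _), rfl⟩

theorem two_mul_length_infixFolds (l : List α) :
    2 * (l.infixFolds f).length = l.length * (l.length + 1) := by
  induction l with
  | nil => rfl
  | cons a l ih =>
    simp only [infixFolds, tails_cons, flatMap_cons, length_append, leftFolds, length_map,
      length_inits, length_cons] at ih ⊢
    rw [mul_add, ih]
    ring

end List

namespace Fml

/-- `k's n` is left out: rule (5) produces it from the atoms `k` and `n`, and omitting it keeps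
the number of atoms below `|φ|`. -/
def baseExprs : Fml K G N → List (PExp K G N)
  | .bdto p q => [p, q]
  | .cert k (.bdto (.loc n) p) => [(PExp.key k).s p, .loc n, p]
  | .cert _ ψ => ψ.baseExprs
  | .not ψ => ψ.baseExprs
  | .and ψ χ => ψ.baseExprs ++ χ.baseExprs

def baseAtoms (φ : Fml K G N) : List (PExp K G N) :=
  φ.baseExprs.flatMap PExp.atoms

theorem length_baseAtoms_lt (φ : Fml K G N) : φ.baseAtoms.length < φ.len := by
  fun_induction baseExprs φ with
  | case1 p q =>
    have := p.two_mul_length_atoms; have := q.two_mul_length_atoms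
    have := p.len_pos; have := q.len_pos
    simp [baseAtoms, baseExprs, len]; omega
  | case2 k n p =>
    have := p.two_mul_length_atoms
    simp [baseAtoms, baseExprs, len, PExp.atoms, PExp.len]; omega
  | _ => simp_all [baseAtoms, baseExprs, len]; omega

theorem baseExprs_subset_of_mem_subfmls {φ ψ : Fml K G N} (h : ψ ∈ φ.subfmls) :
    ψ.baseExprs ⊆ φ.baseExprs := by
  fun_induction baseExprs φ with
  | case1 p q =>
    rw [subfmls, Set.mem_singleton_iff] at h
    exact h ▸ List.Subset.refl _
  | case2 k n p =>
    simp only [subfmls, Set.mem_insert_iff, Set.mem_singleton_iff] at h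
    rcases h with rfl | rfl <;> simp [baseExprs]
  | case3 k χ hχ ih =>
    simp only [subfmls, Set.mem_insert_iff] at h
    rcases h with rfl | h
    · simp [baseExprs]
    · simpa [baseExprs, hχ] using ih h
  | case4 χ ih =>
    simp only [subfmls, Set.mem_insert_iff] at h
    rcases h with rfl | h
    · exact List.Subset.refl _
    · simpa [baseExprs] using ih h
  | case5 χ₁ χ₂ ih₁ ih₂ =>
    simp only [subfmls, Set.mem_insert_iff, Set.mem_union] at h
    rcases h with rfl | h | h
    · exact List.Subset.refl _
    · exact fun x hx => List.mem_append_left _ (ih₁ h hx)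
    · exact fun x hx => List.mem_append_right _ (ih₂ h hx)

open PExp

theorem atoms_infix_baseAtoms {φ : Fml K G N} {b : PExp K G N} (hb : b ∈ φ.baseExprs) :
    b.atoms <:+: φ.baseAtoms :=
  List.infix_flatMap_of_mem hb atoms

theorem atoms_eq_singleton_of_mem_baseAtoms {φ : Fml K G N} {x : PExp K G N}
    (hx : x ∈ φ.baseAtoms) : x.atoms = [x] := by
  obtain ⟨b, -, hxb⟩ := List.mem_flatMap.1 hx
  exact atoms_eq_singleton_of_mem hxb

def candidates (φ : Fml K G N) : List (PExp K G N) :=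
  φ.baseExprs.flatMap subexprs ++ φ.baseAtoms.infixFolds s ++ keyLocPairs φ.baseAtoms

theorem mem_candidates {φ : Fml K G N} {p : PExp K G N} :
    p ∈ φ.candidates ↔ (∃ b ∈ φ.baseExprs, p ∈ b.subexprs) ∨
      (∃ a w, a :: w <:+: φ.baseAtoms ∧ w.foldl s a = p) ∨
      (∃ k n, key k ∈ φ.baseAtoms ∧ loc n ∈ φ.baseAtoms ∧ (key k).s (loc n) = p) := by
  simp only [candidates, List.mem_append, List.mem_flatMap, List.mem_infixFolds,
    mem_keyLocPairs, or_assoc]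

theorem mem_candidates_of_mem_baseExprs {φ : Fml K G N} {b : PExp K G N}
    (hb : b ∈ φ.baseExprs) : b ∈ φ.candidates :=
  mem_candidates.2 (Or.inl ⟨b, hb, mem_subexprs_self b⟩)

theorem mem_candidates_of_mem_baseAtoms {φ : Fml K G N} {x : PExp K G N}
    (hx : x ∈ φ.baseAtoms) : x ∈ φ.candidates :=
  mem_candidates.2 (Or.inr (Or.inl ⟨x, [], (List.singleton_infix_iff _ _).2 hx, rfl⟩))

theorem leftAssoc_mem_candidates {φ : Fml K G N} {p : PExp K G N}
    (h : p ∈ φ.candidates) : leftAssoc p ∈ φ.candidates := by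
  rcases mem_candidates.1 h with ⟨b, hb, hp⟩ | ⟨a, w, hw, rfl⟩ | ⟨k, n, -, -, rfl⟩
  · obtain ⟨a, w, hpaw⟩ := List.exists_cons_of_ne_nil p.atoms_ne_nil
    refine mem_candidates.2 (Or.inr (Or.inl ⟨a, w, ?_, (leftAssoc_of_atoms_eq_cons hpaw).symm⟩))
    exact hpaw ▸ (atoms_infix_of_mem_subexprs hp).trans (atoms_infix_baseAtoms hb)
  · rwa [leftAssoc_foldl fun x hx => atoms_eq_singleton_of_mem_baseAtoms (hw.subset hx)]
  · exact h

theorem mem_candidates_of_s_mem {φ : Fml K G N} {p q : PExp K G N}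
    (h : p.s q ∈ φ.candidates) : p ∈ φ.candidates ∧ q ∈ φ.candidates := by
  rcases mem_candidates.1 h with ⟨b, hb, hpq⟩ | ⟨a, w, hw, hpq⟩ | ⟨k, n, hk, hn, hpq⟩
  · have hsub := subexprs_subset_of_mem hpq
    exact ⟨mem_candidates.2 (Or.inl ⟨b, hb, hsub (by simp [subexprs, mem_subexprs_self])⟩),
      mem_candidates.2 (Or.inl ⟨b, hb, hsub (by simp [subexprs, mem_subexprs_self])⟩)⟩
  · rcases List.eq_nil_or_concat' w with rfl | ⟨w, y, rfl⟩
    · obtain ⟨b, -, hb⟩ := List.mem_flatMap.1 (hw.subset List.mem_cons_self)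
      exact absurd (hpq ▸ hb) (s_not_mem_atoms p q b)
    · rw [List.foldl_append, List.foldl_cons, List.foldl_nil] at hpq
      obtain ⟨rfl, rfl⟩ := PExp.s.inj hpq
      refine ⟨mem_candidates.2 (Or.inr (Or.inl ⟨a, w, ?_, rfl⟩)),
        mem_candidates_of_mem_baseAtoms (hw.subset (by simp))⟩
      exact (List.prefix_append (a :: w) [y]).isInfix.trans hw
  · obtain ⟨rfl, rfl⟩ := PExp.s.inj hpq
    exact ⟨mem_candidates_of_mem_baseAtoms hk, mem_candidates_of_mem_baseAtoms hn⟩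

theorem mem_baseAtoms_of_mem_candidates {φ : Fml K G N} {x : PExp K G N} (hx : x.atoms = [x])
    (h : x ∈ φ.candidates) : x ∈ φ.baseAtoms := by
  have hxs : ∀ u v : PExp K G N, u.s v ≠ x := by
    rintro u v rfl
    exact s_not_mem_atoms u v _ (hx ▸ List.mem_singleton_self _)
  rcases mem_candidates.1 h with ⟨b, hb, hxb⟩ | ⟨a, w, hw, rfl⟩ | ⟨k, n, -, -, he⟩
  · have hinf := (atoms_infix_of_mem_subexprs hxb).trans (atoms_infix_baseAtoms hb)
    exact (List.singleton_infix_iff _ _).1 (hx ▸ hinf)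
  · rcases List.eq_nil_or_concat' w with rfl | ⟨w, y, rfl⟩
    · exact hw.subset List.mem_cons_self
    · exact (hxs _ y (by rw [List.foldl_append]; rfl)).elim
  · exact absurd he (hxs _ _)

theorem mem_candidates_of_inP {φ : Fml K G N} {p : PExp K G N} (h : InP φ p) :
    p ∈ φ.candidates := by
  induction h with
  | bdto_left h | bdto_right h | cert_expr h =>
    exact mem_candidates_of_mem_baseExprs (baseExprs_subset_of_mem_subfmls h (by simp [baseExprs]))
  | @cert_name k n p h =>
    have hsub := baseExprs_subset_of_mem_subfmls h
    have hk : key k ∈ φ.baseAtoms :=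
      (atoms_infix_baseAtoms (hsub (by simp [baseExprs] : (key k).s p ∈ _))).subset
        (by simp [atoms])
    have hn : loc n ∈ φ.baseAtoms :=
      (atoms_infix_baseAtoms (hsub (by simp [baseExprs] : loc n ∈ _))).subset (by simp [atoms])
    exact mem_candidates.2 (Or.inr (Or.inr ⟨k, n, hk, hn, rfl⟩))
  | leftAssocVariant _ ih => exact leftAssoc_mem_candidates ih
  | sub_left _ ih => exact (mem_candidates_of_s_mem ih).1
  | sub_right _ ih => exact (mem_candidates_of_s_mem ih).2
  | key_loc _ _ ihk ihn =>
    exact mem_candidates.2 (Or.inr (Or.inr ⟨_, _, mem_baseAtoms_of_mem_candidates rfl ihk,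
      mem_baseAtoms_of_mem_candidates rfl ihn, rfl⟩))

theorem length_candidates_lt (φ : Fml K G N) : φ.candidates.length < 2 * φ.len ^ 2 := by
  have hS : (φ.baseExprs.map PExp.len).sum ≤ 2 * φ.baseAtoms.length := sum_len_le _
  have hF := List.two_mul_length_infixFolds (f := PExp.s) φ.baseAtoms
  have hKL := four_mul_length_keyLocPairs_le φ.baseAtoms
  have hT := φ.length_baseAtoms_lt
  have hlen : φ.candidates.length = (φ.baseExprs.map PExp.len).sum +
      (φ.baseAtoms.infixFolds s).length + (keyLocPairs φ.baseAtoms).length := by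
    simp [candidates, List.length_flatMap, length_subexprs, add_assoc]
  nlinarith [Nat.mul_le_mul hT hT]

end Fml

theorem closure_set_bound_general (φ : Fml K G N) :
    Cardinal.mk {p : PExp K G N | InP φ p} < 2 * (φ.len : Cardinal) ^ 2 := by
  classical
  have hsub : {p | InP φ p} ⊆ (φ.candidates.toFinset : Set (PExp K G N)) :=
    fun p hp => List.mem_toFinset.2 (Fml.mem_candidates_of_inP hp)
  calc Cardinal.mk {p | InP φ p}
      ≤ φ.candidates.toFinset.card :=
        (Cardinal.mk_le_mk_of_subset hsub).trans_eq Cardinal.mk_coe_finset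
    _ ≤ φ.candidates.length := by exact_mod_cast List.toFinset_card_le _
    _ < ((2 * φ.len ^ 2 : ℕ) : Cardinal) := by exact_mod_cast φ.length_candidates_lt
    _ = 2 * (φ.len : Cardinal) ^ 2 := by push_cast; rfl

/-- Lemma A.4: the closure set `P` of `φ` has fewer than
`2·|φ|²` elements. -/
theorem closure_set_bound [Nonempty K] (φ : Fml K G N) :
    Cardinal.mk {p : PExp K G N | InP φ p} < 2 * (φ.len : Cardinal) ^ 2 :=
  closure_set_bound_general φ
end
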